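/- Potential step inequality for miner transactions: assume r(x0) = p_x/p_y. If a miner transaction Sell(X,q) (q ≥ 0) is executed at a state (x̄, F_y(x̄)) with x̄ ≤ x0, producing the new reserve x̂ = x̄ + (1−f)q and miner profit ΔU = (F_y(x̄) − F_y(x̂))·p_y − q·p_x, then ΔU + φ(x̂) − φ(x̄) ≤ 0. -/

import Mathlib

/-- The potential function `φ`:
`φ(x) = (x − R_x)·p_x + ((F_y(x) − F_y(R_x))/(1−f))·p_y` if `x > R_x`;
`φ(x) = ((x − L_x)/(1−f))·p_x + (F_y(x) − F_y(L_x))·p_y` if `x < L_x`;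
`φ(x) = 0` if `x ∈ [L_x, R_x]`. -/
noncomputable def phi (Fy : ℝ → ℝ) (f px py Lx Rx : ℝ) (x : ℝ) : ℝ :=
  if Rx < x then (x - Rx) * px + ((Fy x - Fy Rx) / (1 - f)) * py
  else if x < Lx then ((x - Lx) / (1 - f)) * px + (Fy x - Fy Lx) * py
  else 0

/-!
Write `V(x) = x·p_x/(1−f) + F_y(x)·p_y` for the value of the reserves `(x, F_y(x))` when `X` is
priced at `p_x/(1−f)`. Since `x̂ − x̄ = (1−f)q`, the quantity `ΔU + φ(x̂) − φ(x̄)` is exactly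
`H(x̂) − H(x̄)` for `H = φ − V`, so it suffices that `H` is antitone. On `(−∞, L_x]` the function
`H` is constant; on `[L_x, R_x]` it is `−V`, and `V' = p_x/(1−f) − r·p_y ≥ 0` there because
`r ≤ r(L_x)`; on `[R_x, ∞)` it equals `−f/(1−f)·(x·p_x − F_y(x)·p_y)` up to a constant, which
is antitone because `F_y` is decreasing.
-/

open Set

noncomputable def reserveValue (Fy : ℝ → ℝ) (px py x : ℝ) : ℝ := x * px + Fy x * py

theorem monotoneOn_reserveValue {Fy : ℝ → ℝ} {px py : ℝ} {s : Set ℝ} (hs : Convex ℝ s)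
    (hFy : ∀ x ∈ s, DifferentiableAt ℝ Fy x) (hr : ∀ x ∈ interior s, -deriv Fy x * py ≤ px) :
    MonotoneOn (reserveValue Fy px py) s := by
  have hderiv : ∀ x ∈ s, HasDerivAt (reserveValue Fy px py) (px + deriv Fy x * py) x := by
    intro x hx
    exact ((hasDerivAt_id' x).mul_const px).add ((hFy x hx).hasDerivAt.mul_const py) |>.congr_deriv
      (by simp)
  refine monotoneOn_of_deriv_nonneg hs
    (fun x hx => (hderiv x hx).continuousAt.continuousWithinAt)
    (fun x hx => (hderiv x (interior_subset hx)).differentiableAt.differentiableWithinAt)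
    fun x hx => ?_
  rw [(hderiv x (interior_subset hx)).deriv]
  linarith [hr x hx]

section

variable {Fy : ℝ → ℝ} {f px py Lx Rx : ℝ}

theorem phi_sub_reserveValue_of_le (hf1 : f < 1) (hLR : Lx ≤ Rx) {x : ℝ} (hx : x ≤ Lx) :
    phi Fy f px py Lx Rx x - reserveValue Fy (px / (1 - f)) py x =
      -reserveValue Fy (px / (1 - f)) py Lx := by
  have h1f : 1 - f ≠ 0 := by linarith
  rcases hx.lt_or_eq with hx | rfl
  · rw [phi, if_neg (by linarith), if_pos hx, reserveValue, reserveValue]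
    field_simp
    ring
  · rw [phi, if_neg (by linarith), if_neg (lt_irrefl x)]
    ring

theorem antitoneOn_phi_sub_reserveValue_Icc (hLx_pos : 0 < Lx)
    (hFy : ∀ x ∈ Ioi (0 : ℝ), DifferentiableAt ℝ Fy x)
    (hr : ∀ x ∈ Ioo Lx Rx, -deriv Fy x * py ≤ px / (1 - f)) :
    AntitoneOn (fun x => phi Fy f px py Lx Rx x - reserveValue Fy (px / (1 - f)) py x)
      (Icc Lx Rx) := by
  have hV := monotoneOn_reserveValue (convex_Icc Lx Rx)
    (fun x hx => hFy x (hLx_pos.trans_le hx.1)) (by rwa [interior_Icc])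
  refine hV.neg.congr fun x hx => ?_
  simp [phi, not_lt.2 hx.1, not_lt.2 hx.2]

theorem antitoneOn_phi_sub_reserveValue_Ici (hf0 : 0 ≤ f) (hf1 : f < 1) (hpx : 0 < px)
    (hpy : 0 < py) (hLR : Lx ≤ Rx) (hFy : AntitoneOn Fy (Ici Rx)) :
    AntitoneOn (fun x => phi Fy f px py Lx Rx x - reserveValue Fy (px / (1 - f)) py x)
      (Ici Rx) := by
  have h1f : 0 < 1 - f := by linarith
  have hphi : ∀ x ∈ Ici Rx,
      phi Fy f px py Lx Rx x = (x - Rx) * px + ((Fy x - Fy Rx) / (1 - f)) * py := by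
    intro x hx
    rcases (mem_Ici.1 hx).lt_or_eq with hx | rfl
    · rw [phi, if_pos hx]
    · simp [phi, not_lt.2 hLR]
  intro a ha b hb hab
  simp only [hphi a ha, hphi b hb, reserveValue]
  have hFab := hFy ha hb hab
  have hnum : 0 ≤ f * ((b - a) * px + (Fy a - Fy b) * py) :=
    mul_nonneg hf0 (add_nonneg (mul_nonneg (by linarith) hpx.le) (mul_nonneg (by linarith) hpy.le))
  rw [← sub_nonneg]
  have hdiff : (a - Rx) * px + (Fy a - Fy Rx) / (1 - f) * py - (a * (px / (1 - f)) + Fy a * py) -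
      ((b - Rx) * px + (Fy b - Fy Rx) / (1 - f) * py - (b * (px / (1 - f)) + Fy b * py)) =
      f * ((b - a) * px + (Fy a - Fy b) * py) / (1 - f) := by
    field_simp
    ring
  rw [hdiff]
  positivity

theorem antitone_phi_sub_reserveValue (hf0 : 0 ≤ f) (hf1 : f < 1) (hpx : 0 < px) (hpy : 0 < py)
    (hFy_diff : ∀ x ∈ Ioi (0 : ℝ), DifferentiableAt ℝ Fy x) (hFy_anti : StrictAntiOn Fy (Ioi 0))
    (hr_anti : StrictAntiOn (fun x => -deriv Fy x) (Ioi 0))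
    (hLx_pos : 0 < Lx) (hLx : -deriv Fy Lx = (1 / (1 - f)) * (px / py))
    (hRx_pos : 0 < Rx) (hRx : -deriv Fy Rx = (1 - f) * (px / py)) :
    Antitone (fun x => phi Fy f px py Lx Rx x - reserveValue Fy (px / (1 - f)) py x) := by
  have h1f : 0 < 1 - f := by linarith
  have hLR : Lx ≤ Rx := by
    refine (hr_anti.le_iff_ge hRx_pos hLx_pos).1 ?_
    simp only [hLx, hRx]
    have hp : 0 ≤ px / py := by positivity
    calc (1 - f) * (px / py) ≤ px / py := mul_le_of_le_one_left hp (by linarith)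
      _ ≤ 1 / (1 - f) * (px / py) := le_mul_of_one_le_left hp (one_le_one_div h1f (by linarith))
  have hIic_Lx : AntitoneOn
      (fun x => phi Fy f px py Lx Rx x - reserveValue Fy (px / (1 - f)) py x) (Iic Lx) :=
    fun a ha b hb _ => ((phi_sub_reserveValue_of_le hf1 hLR hb).trans
      (phi_sub_reserveValue_of_le hf1 hLR ha).symm).le
  have hIcc : AntitoneOn _ (Icc Lx Rx) :=
    antitoneOn_phi_sub_reserveValue_Icc hLx_pos hFy_diff fun x hx => by
      have hrx : -deriv Fy x < -deriv Fy Lx := hr_anti hLx_pos (hLx_pos.trans hx.1) hx.1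
      calc -deriv Fy x * py ≤ 1 / (1 - f) * (px / py) * py := by rw [← hLx]; gcongr
        _ = px / (1 - f) := by field_simp
  have hIci := antitoneOn_phi_sub_reserveValue_Ici hf0 hf1 hpx hpy hLR
    (hFy_anti.antitoneOn.mono (Ici_subset_Ioi.2 hRx_pos))
  have hIic_Rx := hIic_Lx.union_right hIcc isGreatest_Iic (isLeast_Icc hLR)
  rw [Iic_union_Icc_eq_Iic hLR] at hIic_Rx
  exact hIic_Rx.Iic_union_Ici hIci

end

theorem phi_step_miner_general
    (Fy : ℝ → ℝ) (f px py Lx Rx xbar q : ℝ)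
    (hf0 : 0 ≤ f) (hf1 : f < 1)
    (hpx : 0 < px) (hpy : 0 < py)
    (hFy_diff : ∀ x ∈ Set.Ioi (0 : ℝ), DifferentiableAt ℝ Fy x)
    (hFy_anti : StrictAntiOn Fy (Set.Ioi 0))
    (hr_anti : StrictAntiOn (fun x => -deriv Fy x) (Set.Ioi 0))
    (hLx_pos : 0 < Lx) (hLx : -deriv Fy Lx = (1 / (1 - f)) * (px / py))
    (hRx_pos : 0 < Rx) (hRx : -deriv Fy Rx = (1 - f) * (px / py))
    (hq : 0 ≤ q) :
    ((Fy xbar - Fy (xbar + (1 - f) * q)) * py - q * px) +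
        phi Fy f px py Lx Rx (xbar + (1 - f) * q) - phi Fy f px py Lx Rx xbar ≤ 0 := by
  have h1f : 0 < 1 - f := by linarith
  have hH := antitone_phi_sub_reserveValue hf0 hf1 hpx hpy hFy_diff hFy_anti hr_anti hLx_pos hLx
    hRx_pos hRx (le_add_of_nonneg_right (mul_nonneg h1f.le hq) : xbar ≤ xbar + (1 - f) * q)
  have hvalue : (xbar + (1 - f) * q) * (px / (1 - f)) = xbar * (px / (1 - f)) + q * px := by
    field_simp
  simp only [reserveValue] at hH
  linarith

/-- **potential step inequality for miner transactions.**
Assume `r(x0) = p_x/p_y`. If a miner transaction `Sell(X,q)` (`q ≥ 0`) is executed at a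
state `(x̄, F_y(x̄))` with `x̄ ≤ x0`, producing the new reserve `x̂ = x̄ + (1−f)q` and
miner profit `ΔU = (F_y(x̄) − F_y(x̂))·p_y − q·p_x`, then `ΔU + φ(x̂) − φ(x̄) ≤ 0`.

The CFMM is given by a differentiable, strictly decreasing reserve curve `Fy` on `(0,∞)`,
with marginal exchange rate `r x = −Fy′ x` positive and strictly decreasing there;
`p_x, p_y > 0`, `f ∈ [0,1)`, `L_x` satisfies `r L_x = (1/(1−f))·(p_x/p_y)` and `R_x`
satisfies `r R_x = (1−f)·(p_x/p_y)`. -/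
theorem phi_step_miner
    (Fy : ℝ → ℝ) (f px py Lx Rx x0 xbar q : ℝ)
    (hf0 : 0 ≤ f) (hf1 : f < 1)
    (hpx : 0 < px) (hpy : 0 < py)
    (hFy_diff : ∀ x ∈ Set.Ioi (0 : ℝ), DifferentiableAt ℝ Fy x)
    (hFy_anti : StrictAntiOn Fy (Set.Ioi 0))
    (hr_pos : ∀ x ∈ Set.Ioi (0 : ℝ), 0 < -deriv Fy x)
    (hr_anti : StrictAntiOn (fun x => -deriv Fy x) (Set.Ioi 0))
    (hLx_pos : 0 < Lx) (hLx : -deriv Fy Lx = (1 / (1 - f)) * (px / py))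
    (hRx_pos : 0 < Rx) (hRx : -deriv Fy Rx = (1 - f) * (px / py))
    (hx0_pos : 0 < x0) (hx0 : -deriv Fy x0 = px / py)
    (hxbar_pos : 0 < xbar) (hxbar : xbar ≤ x0)
    (hq : 0 ≤ q) :
    ((Fy xbar - Fy (xbar + (1 - f) * q)) * py - q * px) +
        phi Fy f px py Lx Rx (xbar + (1 - f) * q) - phi Fy f px py Lx Rx xbar ≤ 0 :=
  phi_step_miner_general Fy f px py Lx Rx xbar q hf0 hf1 hpx hpy hFy_diff hFy_anti hr_anti hLx_pos
    hLx hRx_pos hRx hq
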